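/- Let m ≥ 1 be an integer, let a : ℝ^m → ℝ be locally bounded, let b : ℝ^m → ℝ be continuous, and let F be a nonlinearity. Set B₀ = { x ∈ ℝ^m : b(x) ≤ 0 }. Let Ω ⊆ ℝ^m be an open set containing the closure of B₀, and suppose there exists a twice continuously differentiable function u : Ω → ℝ with 0 < u(x) for all x ∈ Ω, sup_Ω u < ∞, and Δu(x) + a(x)·u(x) − b(x)·F(u(x)) ≤ 0 for all x ∈ Ω, where Δ is the Euclidean Laplacian. Then for every ε > 0 there exists an open set U ⊆ ℝ^m containing the closure of B₀ such that ∫_{ℝ^m} ( ‖∇φ(x)‖² − a(x)·φ(x)² ) dx ≥ −ε·∫_{ℝ^m} φ(x)² dx for every continuously differentiable φ : ℝ^m → ℝ with compact support contained in U. -/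

import Mathlib

/-!
Picone's identity: for `u > 0` and the vector field `X = (φ² / u) ∇u`,
`|∇φ|² + (Δu / u) φ² - div X = |∇φ - (φ / u) ∇u|² ≥ 0`, and `div X` integrates to zero, so
`∫ |∇φ|² ≥ -∫ (Δu / u) φ²`. Take `U = Ω ∩ {b C < ε}` with `C = F(M) / M` for a positive upper
bound `M` of `u`: as `F(t) / t` is increasing, `b F(u) ≤ ε u` on `U`, so there the supersolution
inequality gives `Δu / u ≤ ε - a`.
-/

open MeasureTheory

/-- The Euclidean Laplacian: trace of the Hessian. -/
noncomputable def laplacian {m : ℕ} (u : EuclideanSpace ℝ (Fin m) → ℝ)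
    (x : EuclideanSpace ℝ (Fin m)) : ℝ :=
  ∑ i, fderiv ℝ (fun y => fderiv ℝ u y (EuclideanSpace.single i (1 : ℝ))) x
    (EuclideanSpace.single i (1 : ℝ))

/-- A nonlinearity in the sense of (2.12) of the paper (with `p = 2`). -/
structure IsNonlinearity (F : ℝ → ℝ) : Prop where
  cont : ContinuousOn F (Set.Ici 0)
  zero : F 0 = 0
  pos : ∀ t : ℝ, 0 < t → 0 < F t
  strictMono : StrictMonoOn (fun t => F t / t) (Set.Ioi 0)
  tendsto_zero : Filter.Tendsto (fun t => F t / t) (nhdsWithin 0 (Set.Ioi 0)) (nhds 0)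
  tendsto_top : Filter.Tendsto (fun t => F t / t) Filter.atTop Filter.atTop

open Filter Topology

theorem IsNonlinearity.mul_apply_le_mul {F : ℝ → ℝ} (hF : IsNonlinearity F) {β ε t M : ℝ}
    (hε : 0 ≤ ε) (ht : 0 < t) (htM : t ≤ M) (hβ : β * (F M / M) ≤ ε) : β * F t ≤ ε * t := by
  rcases le_or_gt β 0 with hβ0 | hβ0
  · nlinarith [hF.pos t ht]
  · have hmono : F t / t ≤ F M / M := hF.strictMono.monotoneOn ht (ht.trans_le htM) htM
    calc β * F t = β * (F t / t) * t := by field_simp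
      _ ≤ β * (F M / M) * t := by gcongr
      _ ≤ ε * t := by gcongr

theorem locallyIntegrable_of_locallyBounded {X : Type*} [TopologicalSpace X] [MeasurableSpace X]
    [OpensMeasurableSpace X] {μ : Measure X} [IsLocallyFiniteMeasure μ] {a : X → ℝ}
    (ha : AEStronglyMeasurable a μ)
    (hbdd : ∀ x, ∃ U ∈ 𝓝 x, ∃ C : ℝ, ∀ y ∈ U, |a y| ≤ C) : LocallyIntegrable a μ := by
  intro x
  obtain ⟨U, hU, C, hC⟩ := hbdd x
  obtain ⟨W, hWU, hWo, hxW⟩ := mem_nhds_iff.1 hU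
  obtain ⟨V, hxV, hVo, hVμ⟩ := μ.exists_isOpen_measure_lt_top x
  refine ⟨W ∩ V, (hWo.inter hVo).mem_nhds ⟨hxW, hxV⟩, Measure.integrableOn_of_bounded (M := C)
    (measure_inter_lt_top_of_right_ne_top hVμ.ne).ne ha ?_⟩
  exact ae_restrict_of_forall_mem (hWo.inter hVo).measurableSet fun y hy => hC y (hWU hy.1)

theorem ContDiff.mul_of_contDiffAt_tsupport {𝕜 E : Type*} [NontriviallyNormedField 𝕜]
    [NormedAddCommGroup E] [NormedSpace 𝕜 E] {g h : E → 𝕜} {n : WithTop ℕ∞}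
    (hg : ContDiff 𝕜 n g) (hh : ∀ x ∈ tsupport g, ContDiffAt 𝕜 n h x) :
    ContDiff 𝕜 n (fun x => g x * h x) := by
  refine contDiff_iff_contDiffAt.2 fun x => ?_
  by_cases hx : x ∈ tsupport g
  · exact hg.contDiffAt.mul (hh x hx)
  · have hg0 := notMem_tsupport_iff_eventuallyEq.1 hx
    exact (contDiffAt_const (c := 0)).congr_of_eventuallyEq (hg0.mono fun y hy => by simp [hy])

theorem integrable_fderiv_apply {E : Type*} [NormedAddCommGroup E] [NormedSpace ℝ E]
    [MeasurableSpace E] [OpensMeasurableSpace E] (μ : Measure E) [IsFiniteMeasureOnCompacts μ]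
    {h : E → ℝ} (h1 : ContDiff ℝ 1 h) (h2 : HasCompactSupport h) (v : E) :
    Integrable (fun x => fderiv ℝ h x v) μ :=
  ((h1.continuous_fderiv one_ne_zero).clm_apply continuous_const).integrable_of_hasCompactSupport
    (h2.fderiv_apply ℝ v)

section IntegrationByParts

variable {E : Type*} [NormedAddCommGroup E] [NormedSpace ℝ E] [MeasurableSpace E] [BorelSpace E]
  [FiniteDimensional ℝ E] (μ : Measure E) [μ.IsAddHaarMeasure]

theorem integral_fderiv_apply_eq_zero {h : E → ℝ} (h1 : ContDiff ℝ 1 h)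
    (h2 : HasCompactSupport h) (v : E) : ∫ x, fderiv ℝ h x v ∂μ = 0 := by
  obtain ⟨C, hC⟩ := h1.lipschitzWith_of_hasCompactSupport h2 one_ne_zero
  have hibp := LipschitzWith.integral_lineDeriv_mul_eq (μ := μ)
    (LipschitzWith.const (b := (1 : ℝ))) hC h2 (-v)
  have hconst : ∀ x : E, lineDeriv ℝ (fun _ : E => (1 : ℝ)) x (-v) = 0 := fun x =>
    ((hasFDerivAt_const (1 : ℝ) x).hasLineDerivAt (-v)).lineDeriv.trans (by simp)
  have hline : ∀ x : E, lineDeriv ℝ h x (- -v) = fderiv ℝ h x v := fun x => by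
    rw [neg_neg, (h1.differentiable one_ne_zero x).lineDeriv_eq_fderiv]
  simp only [hconst, zero_mul, integral_zero, hline, mul_one] at hibp
  exact hibp.symm

end IntegrationByParts

section Gradient

variable {E : Type*} [NormedAddCommGroup E] [InnerProductSpace ℝ E] [CompleteSpace E]

theorem norm_gradient (φ : E → ℝ) (x : E) : ‖gradient φ x‖ = ‖fderiv ℝ φ x‖ :=
  (InnerProductSpace.toDual ℝ E).symm.norm_map _

theorem integrable_norm_gradient_sq [MeasurableSpace E] [OpensMeasurableSpace E]
    {μ : Measure E} [IsFiniteMeasureOnCompacts μ] {φ : E → ℝ} (hφ : ContDiff ℝ 1 φ)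
    (hφc : HasCompactSupport φ) : Integrable (fun x => ‖gradient φ x‖ ^ 2) μ := by
  simp only [norm_gradient]
  have hc : HasCompactSupport (fun x => ‖fderiv ℝ φ x‖ ^ 2) :=
    hφc.mono' fun x hx => support_fderiv_subset ℝ fun h0 => hx (by simp [h0])
  exact ((hφ.continuous_fderiv one_ne_zero).norm.pow 2).integrable_of_hasCompactSupport hc

end Gradient

theorem norm_gradient_sq_eq_sum {m : ℕ} (φ : EuclideanSpace ℝ (Fin m) → ℝ)
    (x : EuclideanSpace ℝ (Fin m)) :
    ‖gradient φ x‖ ^ 2 = ∑ i, fderiv ℝ φ x (EuclideanSpace.single i 1) ^ 2 := by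
  rw [EuclideanSpace.norm_sq_eq]
  refine Finset.sum_congr rfl fun i _ => ?_
  have h : inner ℝ (gradient φ x) (EuclideanSpace.single i (1 : ℝ))
      = fderiv ℝ φ x (EuclideanSpace.single i 1) := InnerProductSpace.toDual_symm_apply
  rw [← h, EuclideanSpace.inner_single_right, Real.norm_eq_abs, sq_abs]
  simp

section Picone

variable {E : Type*} [NormedAddCommGroup E] [NormedSpace ℝ E]

noncomputable def piconeField (u φ : E → ℝ) (v : E) : E → ℝ :=
  fun y => φ y ^ 2 * (fderiv ℝ u y v / u y)

theorem fderiv_piconeField_apply {u φ : E → ℝ} {x v : E} (hφ : DifferentiableAt ℝ φ x)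
    (hu : DifferentiableAt ℝ u x) (hDu : DifferentiableAt ℝ (fun y => fderiv ℝ u y v) x)
    (hux : u x ≠ 0) :
    fderiv ℝ (piconeField u φ v) x v = fderiv ℝ φ x v ^ 2
      + φ x ^ 2 / u x * fderiv ℝ (fun y => fderiv ℝ u y v) x v
      - (fderiv ℝ φ x v - φ x / u x * fderiv ℝ u x v) ^ 2 := by
  have hinv : HasFDerivAt (fun y => (u y)⁻¹) (-(u x ^ 2)⁻¹ • fderiv ℝ u x) x :=
    (hasDerivAt_inv hux).comp_hasFDerivAt x hu.hasFDerivAt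
  have hX : HasFDerivAt (piconeField u φ v) _ x :=
    (hφ.hasFDerivAt.pow 2).mul (hDu.hasFDerivAt.mul hinv)
  rw [hX.fderiv]
  simp only [add_apply, smul_apply, smul_eq_mul, nsmul_eq_mul]
  field_simp
  ring

theorem tsupport_piconeField_subset (u φ : E → ℝ) (v : E) :
    tsupport (piconeField u φ v) ⊆ tsupport φ :=
  closure_minimal (fun y hy => subset_tsupport φ fun hφy => hy (by simp [piconeField, hφy]))
    (isClosed_tsupport φ)

theorem contDiff_piconeField {u φ : E → ℝ} (hφ : ContDiff ℝ 1 φ)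
    (hu : ∀ x ∈ tsupport φ, ContDiffAt ℝ 2 u x) (hu0 : ∀ x ∈ tsupport φ, u x ≠ 0) (v : E) :
    ContDiff ℝ 1 (piconeField u φ v) := by
  refine (hφ.pow 2).mul_of_contDiffAt_tsupport fun x hx => ?_
  have hxφ := tsupport_comp_subset (g := fun t : ℝ => t ^ 2) (by simp) φ hx
  exact (((hu x hxφ).fderiv_right (m := 1) (by norm_num)).clm_apply contDiffAt_const).div
    ((hu x hxφ).of_le one_le_two) (hu0 x hxφ)

end Picone

section Divergence

variable {m : ℕ}

noncomputable def divergence (X : Fin m → EuclideanSpace ℝ (Fin m) → ℝ)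
    (x : EuclideanSpace ℝ (Fin m)) : ℝ :=
  ∑ i, fderiv ℝ (X i) x (EuclideanSpace.single i 1)

variable {X : Fin m → EuclideanSpace ℝ (Fin m) → ℝ}

theorem integrable_divergence (hX : ∀ i, ContDiff ℝ 1 (X i))
    (hXc : ∀ i, HasCompactSupport (X i)) : Integrable (divergence X) :=
  integrable_finsetSum _ fun i _ => integrable_fderiv_apply _ (hX i) (hXc i) _

theorem integral_divergence_eq_zero (hX : ∀ i, ContDiff ℝ 1 (X i))
    (hXc : ∀ i, HasCompactSupport (X i)) : ∫ x, divergence X x = 0 := by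
  simp only [divergence]
  rw [integral_finsetSum _ fun i _ => integrable_fderiv_apply _ (hX i) (hXc i) _]
  exact Finset.sum_eq_zero fun i _ => integral_fderiv_apply_eq_zero _ (hX i) (hXc i) _

theorem divergence_piconeField_le {u φ : EuclideanSpace ℝ (Fin m) → ℝ}
    {x : EuclideanSpace ℝ (Fin m)} (hφ : DifferentiableAt ℝ φ x) (hu : ContDiffAt ℝ 2 u x)
    (hux : u x ≠ 0) :
    divergence (fun i => piconeField u φ (EuclideanSpace.single i 1)) x
      ≤ ‖gradient φ x‖ ^ 2 + φ x ^ 2 / u x * laplacian u x := by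
  have hDu : ∀ v, DifferentiableAt ℝ (fun y => fderiv ℝ u y v) x := fun v =>
    ((hu.fderiv_right (m := 1) (by norm_num)).clm_apply contDiffAt_const).differentiableAt
      one_ne_zero
  rw [norm_gradient_sq_eq_sum, laplacian, Finset.mul_sum, ← Finset.sum_add_distrib, divergence]
  gcongr with i
  rw [fderiv_piconeField_apply hφ (hu.differentiableAt (by norm_num)) (hDu _) hux]
  exact sub_le_self _ (sq_nonneg _)

theorem divergence_piconeField_le_of_laplacian_le {a u φ : EuclideanSpace ℝ (Fin m) → ℝ} {ε : ℝ}
    (hφ : Differentiable ℝ φ) (hu : ∀ x ∈ tsupport φ, ContDiffAt ℝ 2 u x)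
    (hupos : ∀ x ∈ tsupport φ, 0 < u x)
    (hlap : ∀ x ∈ tsupport φ, laplacian u x ≤ (ε - a x) * u x) (x : EuclideanSpace ℝ (Fin m)) :
    divergence (fun i => piconeField u φ (EuclideanSpace.single i 1)) x
      ≤ ‖gradient φ x‖ ^ 2 + (ε - a x) * φ x ^ 2 := by
  by_cases hx : x ∈ tsupport φ
  · have hux := hupos x hx
    have hbound : φ x ^ 2 / u x * laplacian u x ≤ (ε - a x) * φ x ^ 2 := by
      rw [div_mul_eq_mul_div, div_le_iff₀ hux]
      calc φ x ^ 2 * laplacian u x ≤ φ x ^ 2 * ((ε - a x) * u x) :=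
            mul_le_mul_of_nonneg_left (hlap x hx) (sq_nonneg _)
        _ = (ε - a x) * φ x ^ 2 * u x := by ring
    linarith [divergence_piconeField_le (hφ x) (hu x hx) hux.ne']
  · have hdiv : divergence (fun i => piconeField u φ (EuclideanSpace.single i 1)) x = 0 :=
      Finset.sum_eq_zero fun i _ => by
        rw [fderiv_of_notMem_tsupport ℝ fun h => hx (tsupport_piconeField_subset _ _ _ h)]
        rfl
    rw [hdiv, image_eq_zero_of_notMem_tsupport hx]
    simp

theorem neg_mul_integral_sq_le_of_laplacian_le {a u φ : EuclideanSpace ℝ (Fin m) → ℝ} {ε : ℝ}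
    (ha : LocallyIntegrable a) (hφ : ContDiff ℝ 1 φ) (hφc : HasCompactSupport φ)
    (hu : ∀ x ∈ tsupport φ, ContDiffAt ℝ 2 u x) (hupos : ∀ x ∈ tsupport φ, 0 < u x)
    (hlap : ∀ x ∈ tsupport φ, laplacian u x ≤ (ε - a x) * u x) :
    -ε * ∫ x, φ x ^ 2 ≤ ∫ x, (‖gradient φ x‖ ^ 2 - a x * φ x ^ 2) := by
  set X := fun i : Fin m => piconeField u φ (EuclideanSpace.single i 1)
  have hX : ∀ i, ContDiff ℝ 1 (X i) := fun i =>
    contDiff_piconeField hφ hu (fun x hx => (hupos x hx).ne') _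
  have hXc : ∀ i, HasCompactSupport (X i) := fun i =>
    hφc.mono' ((subset_tsupport _).trans (tsupport_piconeField_subset _ _ _))
  have hφ2c : HasCompactSupport (fun x => φ x ^ 2) :=
    hφc.mono' fun x hx => subset_tsupport φ fun h0 => hx (by simp [h0])
  have hφ2 : Integrable (fun x => φ x ^ 2) :=
    (hφ.continuous.pow 2).integrable_of_hasCompactSupport hφ2c
  have haφ2 : Integrable (fun x => a x * φ x ^ 2) :=
    ha.integrable_smul_right_of_hasCompactSupport (hφ.continuous.pow 2) hφ2c
  calc -ε * ∫ x, φ x ^ 2 = ∫ x, (-ε * φ x ^ 2 + divergence X x) := by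
        rw [integral_add (hφ2.const_mul _) (integrable_divergence hX hXc), integral_const_mul,
          integral_divergence_eq_zero hX hXc, add_zero]
    _ ≤ ∫ x, (‖gradient φ x‖ ^ 2 - a x * φ x ^ 2) := by
        refine integral_mono ((hφ2.const_mul _).add (integrable_divergence hX hXc))
          ((integrable_norm_gradient_sq hφ hφc).sub haφ2) fun x => ?_
        linarith [divergence_piconeField_le_of_laplacian_le (hφ.differentiable one_ne_zero)
          hu hupos hlap x]

end Divergence

theorem fundamental_tone_nonneg_general (m : ℕ)
    (a : EuclideanSpace ℝ (Fin m) → ℝ) (ha_meas : Measurable a)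
    (ha_loc : ∀ x : EuclideanSpace ℝ (Fin m),
      ∃ U ∈ nhds x, ∃ C : ℝ, ∀ y ∈ U, |a y| ≤ C)
    (b : EuclideanSpace ℝ (Fin m) → ℝ) (hb : Continuous b)
    (F : ℝ → ℝ) (hF : IsNonlinearity F)
    (Ω : Set (EuclideanSpace ℝ (Fin m))) (hΩ : IsOpen Ω)
    (hB₀ : closure {x | b x ≤ 0} ⊆ Ω)
    (u : EuclideanSpace ℝ (Fin m) → ℝ)
    (hu : ContDiffOn ℝ 2 u Ω) (hupos : ∀ x ∈ Ω, 0 < u x)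
    (hubdd : BddAbove (u '' Ω))
    (hsuper : ∀ x ∈ Ω, laplacian u x + a x * u x - b x * F (u x) ≤ 0) :
    ∀ ε > (0 : ℝ), ∃ U : Set (EuclideanSpace ℝ (Fin m)), IsOpen U ∧
      closure {x | b x ≤ 0} ⊆ U ∧
      ∀ φ : EuclideanSpace ℝ (Fin m) → ℝ,
        ContDiff ℝ 1 φ → HasCompactSupport φ → tsupport φ ⊆ U →
        -ε * ∫ x, (φ x) ^ 2 ≤ ∫ x, (‖gradient φ x‖ ^ 2 - a x * (φ x) ^ 2) := by
  intro ε hε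
  obtain ⟨M, hM⟩ := hubdd
  have hM₁ : 0 < max M 1 := lt_max_of_lt_right one_pos
  set C := F (max M 1) / max M 1
  have hC : 0 < C := div_pos (hF.pos _ hM₁) hM₁
  set U := Ω ∩ {x | b x * C < ε}
  have hlap : ∀ x ∈ U, laplacian u x ≤ (ε - a x) * u x := fun x ⟨hx, hbx⟩ => by
    have := hF.mul_apply_le_mul hε.le (hupos x hx) ((hM ⟨x, hx, rfl⟩).trans (le_max_left _ _))
      (le_of_lt hbx)
    linarith [hsuper x hx]
  refine ⟨U, hΩ.inter (isOpen_lt (hb.mul continuous_const) continuous_const),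
    fun x hx => ⟨hB₀ hx, ?_⟩, fun φ hφ hφc hφU => ?_⟩
  · have hbx : b x ≤ 0 := closure_minimal subset_rfl (isClosed_le hb continuous_const) hx
    exact (mul_nonpos_of_nonpos_of_nonneg hbx hC.le).trans_lt hε
  exact neg_mul_integral_sq_le_of_laplacian_le
    (locallyIntegrable_of_locallyBounded ha_meas.aestronglyMeasurable ha_loc) hφ hφc
    (fun x hx => hu.contDiffAt (hΩ.mem_nhds (hφU hx).1)) (fun x hx => hupos x (hφU hx).1)
    (fun x hx => hlap x (hφU hx))

/-- Proposition 6.5 of the paper specialized to `M = ℝ^m`, `p = 2`, `f ≡ 0`: a positive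
bounded supersolution of `Δu + a u − b F(u) ≤ 0` on a neighbourhood `Ω` of the closure
of `B₀ = {b ≤ 0}` forces the generalized fundamental tone `λ_a(B₀)` to be non-negative,
i.e. for every `ε > 0` there is an open set `U ⊇ closure B₀` on which
`∫(‖∇φ‖² − a φ²) ≥ −ε ∫ φ²` for all test functions `φ` supported in `U`. -/
theorem fundamental_tone_nonneg (m : ℕ) (hm : 1 ≤ m)
    (a : EuclideanSpace ℝ (Fin m) → ℝ) (ha_meas : Measurable a)
    (ha_loc : ∀ x : EuclideanSpace ℝ (Fin m),
      ∃ U ∈ nhds x, ∃ C : ℝ, ∀ y ∈ U, |a y| ≤ C)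
    (b : EuclideanSpace ℝ (Fin m) → ℝ) (hb : Continuous b)
    (F : ℝ → ℝ) (hF : IsNonlinearity F)
    (Ω : Set (EuclideanSpace ℝ (Fin m))) (hΩ : IsOpen Ω)
    (hB₀ : closure {x | b x ≤ 0} ⊆ Ω)
    (u : EuclideanSpace ℝ (Fin m) → ℝ)
    (hu : ContDiffOn ℝ 2 u Ω) (hupos : ∀ x ∈ Ω, 0 < u x)
    (hubdd : BddAbove (u '' Ω))
    (hsuper : ∀ x ∈ Ω, laplacian u x + a x * u x - b x * F (u x) ≤ 0) :
    ∀ ε > (0 : ℝ), ∃ U : Set (EuclideanSpace ℝ (Fin m)), IsOpen U ∧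
      closure {x | b x ≤ 0} ⊆ U ∧
      ∀ φ : EuclideanSpace ℝ (Fin m) → ℝ,
        ContDiff ℝ 1 φ → HasCompactSupport φ → tsupport φ ⊆ U →
        -ε * ∫ x, (φ x) ^ 2 ≤ ∫ x, (‖gradient φ x‖ ^ 2 - a x * (φ x) ^ 2) :=
  fundamental_tone_nonneg_general m a ha_meas ha_loc b hb F hF Ω hΩ hB₀ u hu hupos hubdd hsuper
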